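/- arXiv:1904.04732 — 3 statements merged into one kernel-verified Lean document; each statement's English description precedes it below -/
import Mathlib

section
/- Let Φ be the CDF of the standard normal distribution and Φ⁻¹ its inverse on (0,1). Then Φ⁻¹(γ) = √(2 log(1/(1−γ))) + o(1) as γ → 1⁻; that is, Φ⁻¹(γ) − √(2 log(1/(1−γ))) → 0 as γ → 1 from below. -/
open Filter

noncomputable def stdGaussianPDF (z : ℝ) : ℝ :=
  (Real.sqrt (2 * Real.pi))⁻¹ * Real.exp (-z ^ 2 / 2)

noncomputable def stdGaussianCDF (z : ℝ) : ℝ :=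
  ∫ t in Set.Iic z, stdGaussianPDF t

open Real MeasureTheory ProbabilityTheory Set Topology

/-! Write `Q z = ∫_z^∞ φ` and `g = √(2 log (1 / (1 - γ)))`, so that `z = Φ⁻¹ γ` solves
`Q z = exp (-g² / 2)`. Since `φ (g + s) = exp (-g² / 2) φ s exp (-s g)`, the Mills bound
`Q (g + ε) ≤ φ (g + ε) / (g + ε)` and the rectangle bound
`Q (g - ε) ≥ (ε / 2) φ (g - ε / 2)` place `exp (-g² / 2)` strictly between `Q (g + ε)` and
`Q (g - ε)` once `g` is large, and `Q` is antitone, so `|z - g| < ε`. -/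

lemma stdGaussianPDF_eq_gaussianPDFReal : stdGaussianPDF = gaussianPDFReal 0 1 := by
  ext z
  simp [stdGaussianPDF, gaussianPDFReal]

lemma stdGaussianPDF_pos (z : ℝ) : 0 < stdGaussianPDF z := by
  unfold stdGaussianPDF
  positivity

lemma integrable_stdGaussianPDF : Integrable stdGaussianPDF :=
  stdGaussianPDF_eq_gaussianPDFReal ▸ integrable_gaussianPDFReal 0 1

lemma one_sub_stdGaussianCDF (z : ℝ) :
    1 - stdGaussianCDF z = ∫ t in Ioi z, stdGaussianPDF t := by
  rw [← integral_gaussianPDFReal_eq_one 0 one_ne_zero,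
    ← stdGaussianPDF_eq_gaussianPDFReal, stdGaussianCDF, ← compl_Iic,
    ← integral_add_compl measurableSet_Iic integrable_stdGaussianPDF, add_sub_cancel_left]

lemma antitone_integral_Ioi_stdGaussianPDF : Antitone fun z => ∫ t in Ioi z, stdGaussianPDF t :=
  fun _ _ hab => setIntegral_mono_set integrable_stdGaussianPDF.integrableOn
    (.of_forall fun z => (stdGaussianPDF_pos z).le) (Ioi_subset_Ioi hab).eventuallyLE

lemma stdGaussianPDF_add (g s : ℝ) :
    stdGaussianPDF (g + s) = rexp (-g ^ 2 / 2) * (stdGaussianPDF s * rexp (-(s * g))) := by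
  simp only [stdGaussianPDF, mul_assoc, mul_left_comm (rexp _) (_⁻¹), ← exp_add]
  ring_nf

lemma tendsto_stdGaussianPDF_atTop : Tendsto stdGaussianPDF atTop (𝓝 0) := by
  have h : Tendsto (fun z : ℝ => -z ^ 2 / 2) atTop atBot :=
    (tendsto_neg_atTop_atBot.comp (tendsto_pow_atTop two_ne_zero)).atBot_div_const two_pos
  have h' := (tendsto_exp_atBot.comp h).const_mul (√(2 * π))⁻¹
  rw [mul_zero] at h'
  exact h'

lemma hasDerivAt_stdGaussianPDF (t : ℝ) :
    HasDerivAt stdGaussianPDF (-(t * stdGaussianPDF t)) t := by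
  have h : HasDerivAt (fun z : ℝ => -z ^ 2 / 2) (-t) t :=
    ((hasDerivAt_pow 2 t).neg.div_const 2).congr_deriv (by ring)
  exact (h.exp.const_mul _).congr_deriv (by unfold stdGaussianPDF; ring)

lemma integrable_mul_stdGaussianPDF : Integrable fun t : ℝ => t * stdGaussianPDF t := by
  refine ((integrable_mul_exp_neg_mul_sq (b := 1 / 2) (by norm_num)).const_mul
    (√(2 * π))⁻¹).congr (.of_forall fun t => ?_)
  simp only [stdGaussianPDF]; ring_nf

lemma integral_Ioi_mul_stdGaussianPDF (x : ℝ) :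
    ∫ t in Ioi x, t * stdGaussianPDF t = stdGaussianPDF x := by
  have h := integral_Ioi_of_hasDerivAt_of_tendsto' (a := x)
    (fun t _ => (hasDerivAt_stdGaussianPDF t).neg.congr_deriv (neg_neg _))
    integrable_mul_stdGaussianPDF.integrableOn tendsto_stdGaussianPDF_atTop.neg
  simpa using h

lemma integral_Ioi_stdGaussianPDF_le {x : ℝ} (hx : 0 < x) :
    ∫ t in Ioi x, stdGaussianPDF t ≤ stdGaussianPDF x / x :=
  calc ∫ t in Ioi x, stdGaussianPDF t ≤ ∫ t in Ioi x, x⁻¹ * (t * stdGaussianPDF t) := by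
        refine setIntegral_mono_on integrable_stdGaussianPDF.integrableOn
          (integrable_mul_stdGaussianPDF.integrableOn.const_mul _) measurableSet_Ioi fun t ht => ?_
        rw [← mul_assoc, inv_mul_eq_div]
        exact le_mul_of_one_le_left (stdGaussianPDF_pos t).le ((one_le_div hx).2 (le_of_lt ht))
    _ = stdGaussianPDF x / x := by
        rw [integral_const_mul, integral_Ioi_mul_stdGaussianPDF, inv_mul_eq_div]

lemma antitoneOn_stdGaussianPDF : AntitoneOn stdGaussianPDF (Ici 0) := by
  intro a ha b _ hab
  unfold stdGaussianPDF
  gcongr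

lemma mul_stdGaussianPDF_le_integral_Ioi {a b : ℝ} (ha : 0 ≤ a) (hab : a ≤ b) :
    (b - a) * stdGaussianPDF b ≤ ∫ t in Ioi a, stdGaussianPDF t :=
  calc (b - a) * stdGaussianPDF b ≤ ∫ t in Ioc a b, stdGaussianPDF t := by
        have h := setIntegral_ge_of_const_le_real measurableSet_Ioc measure_Ioc_lt_top.ne
          (fun t ht => antitoneOn_stdGaussianPDF (ha.trans ht.1.le) (ha.trans hab) ht.2)
          integrable_stdGaussianPDF.integrableOn
        rwa [Real.volume_real_Ioc_of_le hab, mul_comm] at h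
    _ ≤ ∫ t in Ioi a, stdGaussianPDF t :=
        setIntegral_mono_set integrable_stdGaussianPDF.integrableOn
          (.of_forall fun z => (stdGaussianPDF_pos z).le) Ioc_subset_Ioi_self.eventuallyLE

lemma eventually_integral_Ioi_add_lt {ε : ℝ} (hε : 0 < ε) :
    ∀ᶠ g in atTop, ∫ t in Ioi (g + ε), stdGaussianPDF t < rexp (-g ^ 2 / 2) := by
  have hnum : Tendsto (fun g => stdGaussianPDF ε * rexp (-(ε * g))) atTop (𝓝 0) := by
    simpa using (tendsto_exp_atBot.comp
      (tendsto_neg_atTop_atBot.comp (tendsto_id.const_mul_atTop hε))).const_mul (stdGaussianPDF ε)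
  have hsmall := hnum.div_atTop (tendsto_atTop_add_const_right _ ε tendsto_id)
  filter_upwards [hsmall.eventually (gt_mem_nhds one_pos), eventually_gt_atTop 0] with g hg hg0
  calc ∫ t in Ioi (g + ε), stdGaussianPDF t ≤ stdGaussianPDF (g + ε) / (g + ε) :=
        integral_Ioi_stdGaussianPDF_le (by linarith)
    _ = rexp (-g ^ 2 / 2) * (stdGaussianPDF ε * rexp (-(ε * g)) / (g + ε)) := by
        rw [stdGaussianPDF_add, mul_div_assoc]
    _ < rexp (-g ^ 2 / 2) := mul_lt_of_lt_one_right (exp_pos _) hg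

lemma eventually_lt_integral_Ioi_sub {ε : ℝ} (hε : 0 < ε) :
    ∀ᶠ g in atTop, rexp (-g ^ 2 / 2) < ∫ t in Ioi (g - ε), stdGaussianPDF t := by
  set c := ε / 2 * stdGaussianPDF (-(ε / 2))
  have hlarge : Tendsto (fun g => c * rexp (ε / 2 * g)) atTop atTop :=
    (tendsto_exp_atTop.comp (tendsto_id.const_mul_atTop (half_pos hε))).const_mul_atTop
      (mul_pos (half_pos hε) (stdGaussianPDF_pos _))
  filter_upwards [hlarge.eventually_gt_atTop 1, eventually_ge_atTop ε] with g hg hgε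
  calc rexp (-g ^ 2 / 2) < rexp (-g ^ 2 / 2) * (c * rexp (ε / 2 * g)) :=
        lt_mul_of_one_lt_right (exp_pos _) hg
    _ = (g - ε / 2 - (g - ε)) * stdGaussianPDF (g - ε / 2) := by
        rw [sub_eq_add_neg g (ε / 2), stdGaussianPDF_add, neg_mul, neg_neg]
        ring
    _ ≤ ∫ t in Ioi (g - ε), stdGaussianPDF t :=
        mul_stdGaussianPDF_le_integral_Ioi (by linarith) (by linarith)

lemma eventually_abs_sub_lt_of_integral_Ioi_eq {ε : ℝ} (hε : 0 < ε) :
    ∀ᶠ g in atTop,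
      ∀ z, ∫ t in Ioi z, stdGaussianPDF t = rexp (-g ^ 2 / 2) → |z - g| < ε := by
  filter_upwards [eventually_integral_Ioi_add_lt hε, eventually_lt_integral_Ioi_sub hε]
    with g hupper hlower z hz
  rw [← hz] at hupper hlower
  have h1 := antitone_integral_Ioi_stdGaussianPDF.reflect_lt hupper
  have h2 := antitone_integral_Ioi_stdGaussianPDF.reflect_lt hlower
  rw [abs_sub_lt_iff]
  constructor <;> linarith

lemma tendsto_sqrt_two_mul_log_one_div_one_sub :
    Tendsto (fun γ : ℝ => √(2 * log (1 / (1 - γ)))) (𝓝[<] 1) atTop := by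
  have h : Tendsto (fun γ : ℝ => 1 - γ) (𝓝[<] 1) (𝓝[>] 0) :=
    tendsto_nhdsWithin_of_tendsto_nhds_of_eventually_within _
      (((continuous_const.sub continuous_id).tendsto' 1 0 (sub_self 1)).mono_left
        nhdsWithin_le_nhds)
      (eventually_nhdsWithin_of_forall fun γ hγ => mem_Ioi.2 (sub_pos.2 hγ))
  have hinv : Tendsto (fun γ : ℝ => 1 / (1 - γ)) (𝓝[<] 1) atTop := by
    simpa only [one_div, Function.comp_def] using tendsto_inv_nhdsGT_zero.comp h
  exact tendsto_sqrt_atTop.comp ((tendsto_log_atTop.comp hinv).const_mul_atTop two_pos)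

/-- The standard normal quantile function satisfies
`Φ⁻¹(γ) = √(2 log(1/(1−γ))) + o(1)` as `γ → 1⁻`. -/
theorem gaussian_quantile_asymptotics (Φinv : ℝ → ℝ)
    (hinv : ∀ γ ∈ Set.Ioo (0 : ℝ) 1, stdGaussianCDF (Φinv γ) = γ) :
    Tendsto (fun γ => Φinv γ - Real.sqrt (2 * Real.log (1 / (1 - γ))))
      (nhdsWithin 1 (Set.Ioo (0 : ℝ) 1)) (nhds 0) := by
  have hg := tendsto_sqrt_two_mul_log_one_div_one_sub.mono_left
    (nhdsWithin_mono 1 (Ioo_subset_Iio_self (a := 0)))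
  rw [Metric.tendsto_nhds]
  intro ε hε
  filter_upwards [hg.eventually (eventually_abs_sub_lt_of_integral_Ioi_eq hε),
    self_mem_nhdsWithin] with γ hclose hγ
  rw [dist_zero_right, norm_eq_abs]
  refine hclose _ ?_
  have h1γ : 0 < 1 - γ := sub_pos.2 hγ.2
  have hlog : 0 ≤ log (1 / (1 - γ)) := log_nonneg ((one_le_div h1γ).2 (by linarith [hγ.1]))
  rw [← one_sub_stdGaussianCDF, hinv γ hγ, sq_sqrt (by positivity), neg_div,
    mul_div_cancel_left₀ _ two_ne_zero, exp_neg, exp_log (one_div_pos.2 h1γ), one_div, inv_inv]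
end

section
/- Let X be a real-valued Gaussian random variable with mean 0 and variance σ² > 0, and let λ ≥ 2σ. Then (σ⁴/λ³)·φ(λ/σ) ≤ E[(X − λ)⁺] ≤ σ·φ(λ/σ), where φ is the standard normal density and (x)⁺ = max(x, 0). -/
open ProbabilityTheory MeasureTheory

open Real Filter Set

private lemma aux_int_mono {b : ℝ} (hb : 0 < b) (n : ℕ) :
    Integrable fun x : ℝ => x ^ n * Real.exp (-b * x ^ 2) := by
  have h : (-1 : ℝ) < (n : ℝ) := lt_of_lt_of_le (by norm_num) (Nat.cast_nonneg n)
  simpa [Real.rpow_natCast] using integrable_rpow_mul_exp_neg_mul_sq hb h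

private lemma aux_int_cubic {b : ℝ} (hb : 0 < b) (A0 A1 A2 A3 : ℝ) :
    Integrable fun x : ℝ => (A0 + A1 * x + A2 * x ^ 2 + A3 * x ^ 3) * Real.exp (-b * x ^ 2) := by
  have h := ((((aux_int_mono hb 0).const_mul A0).add ((aux_int_mono hb 1).const_mul A1)).add
    ((aux_int_mono hb 2).const_mul A2)).add ((aux_int_mono hb 3).const_mul A3)
  refine h.congr (Filter.Eventually.of_forall fun x => ?_)
  simp only [Pi.add_apply]
  ring

private lemma aux_tend_mono {b : ℝ} (hb : 0 < b) (n : ℕ) :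
    Tendsto (fun x : ℝ => x ^ n * Real.exp (-b * x ^ 2)) atTop (nhds 0) := by
  have h2 : Tendsto (fun x : ℝ => Real.exp (-(1/2) * x)) atTop (nhds 0) :=
    Real.tendsto_exp_atBot.comp (tendsto_id.const_mul_atTop_of_neg (by norm_num))
  have h := (rpow_mul_exp_neg_mul_sq_isLittleO_exp_neg hb (n : ℝ)).tendsto_zero_of_tendsto h2
  simpa [Real.rpow_natCast] using h

private lemma aux_tend_quad {b : ℝ} (hb : 0 < b) (a0 a1 a2 : ℝ) :
    Tendsto (fun x : ℝ => (a0 + a1 * x + a2 * x ^ 2) * Real.exp (-b * x ^ 2)) atTop (nhds 0) := by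
  have h := (((aux_tend_mono hb 0).const_mul a0).add ((aux_tend_mono hb 1).const_mul a1)).add
    ((aux_tend_mono hb 2).const_mul a2)
  simp only [mul_zero, add_zero] at h
  refine Tendsto.congr (fun x => ?_) h
  ring

/-- FTC on `Ioi lam` for a quadratic-polynomial-times-Gaussian antiderivative. -/
private lemma aux_key {b : ℝ} (hb : 0 < b) (a0 a1 a2 lam : ℝ) :
    ∫ x in Ioi lam, ((a1 + 2 * a2 * x) - 2 * b * x * (a0 + a1 * x + a2 * x ^ 2))
        * Real.exp (-b * x ^ 2)
      = -(a0 + a1 * lam + a2 * lam ^ 2) * Real.exp (-b * lam ^ 2) := by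
  have hderiv : ∀ x ∈ Ici lam,
      HasDerivAt (fun y : ℝ => (a0 + a1 * y + a2 * y ^ 2) * Real.exp (-b * y ^ 2))
        (((a1 + 2 * a2 * x) - 2 * b * x * (a0 + a1 * x + a2 * x ^ 2))
          * Real.exp (-b * x ^ 2)) x := by
    intro x _
    have hp : HasDerivAt (fun y : ℝ => a0 + a1 * y + a2 * y ^ 2) (a1 + a2 * (2 * x)) x := by
      simpa [Pi.add_def] using ((((hasDerivAt_id x).const_mul a1).const_add a0).add
        ((hasDerivAt_pow 2 x).const_mul a2))
    have he : HasDerivAt (fun y : ℝ => Real.exp (-b * y ^ 2))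
        (Real.exp (-b * x ^ 2) * (-b * (2 * x))) x := by
      simpa using ((hasDerivAt_pow 2 x).const_mul (-b)).exp
    exact (hp.fun_mul he).congr_deriv (by ring)
  have hint : IntegrableOn
      (fun x : ℝ => ((a1 + 2 * a2 * x) - 2 * b * x * (a0 + a1 * x + a2 * x ^ 2))
        * Real.exp (-b * x ^ 2)) (Ioi lam) := by
    have h := aux_int_cubic hb a1 (2 * a2 - 2 * b * a0) (-(2 * b * a1)) (-(2 * b * a2))
    refine (h.congr (Filter.Eventually.of_forall fun x => ?_)).integrableOn
    ring
  have htend : Tendsto (fun y : ℝ => (a0 + a1 * y + a2 * y ^ 2) * Real.exp (-b * y ^ 2))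
      atTop (nhds 0) := aux_tend_quad hb a0 a1 a2
  have := integral_Ioi_of_hasDerivAt_of_tendsto' hderiv hint htend
  rw [this]
  ring

/-- Two-sided bounds on the expected excess `E[(X − λ)⁺]` of a centered
Gaussian `X ~ N(0, σ²)` over a threshold `λ ≥ 2σ`. -/
theorem gaussian_expected_excess_bounds (σ lam : ℝ) (hσ : 0 < σ)
    (hlam : 2 * σ ≤ lam) :
    σ ^ 4 / lam ^ 3 * stdGaussianPDF (lam / σ) ≤
        ∫ x, max (x - lam) 0 ∂(gaussianReal 0 (Real.toNNReal (σ ^ 2))) ∧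
      (∫ x, max (x - lam) 0 ∂(gaussianReal 0 (Real.toNNReal (σ ^ 2)))) ≤
        σ * stdGaussianPDF (lam / σ) := by
  have hσ2 : (0:ℝ) < σ ^ 2 := by positivity
  have hlam0 : 0 < lam := lt_of_lt_of_le (by linarith) hlam
  set v : NNReal := Real.toNNReal (σ ^ 2) with hv
  have hv0 : v ≠ 0 := by
    simp [hv, Real.toNNReal_eq_zero, not_le, hσ2, hσ.ne']
  set b : ℝ := (2 * σ ^ 2)⁻¹ with hbdef
  have hb : 0 < b := by positivity
  set C : ℝ := (Real.sqrt (2 * π * σ ^ 2))⁻¹ with hCdef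
  have hC : 0 < C := by
    have : 0 < Real.sqrt (2 * π * σ ^ 2) := Real.sqrt_pos.mpr (by positivity)
    positivity
  have hpdf : ∀ x : ℝ, gaussianPDFReal 0 v x = C * Real.exp (-b * x ^ 2) := by
    intro x
    rw [gaussianPDFReal]
    have hvr : ((v : ℝ)) = σ ^ 2 := Real.coe_toNNReal _ hσ2.le
    rw [hvr]
    congr 1
    rw [hbdef]
    field_simp
    simp
  -- Step A : the integral as a set integral over Ioi lam
  have hE : (∫ x, max (x - lam) 0 ∂(gaussianReal 0 v))
      = ∫ x in Ioi lam, (x - lam) * (C * Real.exp (-b * x ^ 2)) := by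
    rw [gaussianReal_of_var_ne_zero 0 hv0]
    have hmeas : Measurable fun x => Real.toNNReal (gaussianPDFReal 0 v x) :=
      (measurable_gaussianPDFReal 0 v).real_toNNReal
    have h1 : (∫ x, max (x - lam) 0 ∂(volume.withDensity (gaussianPDF 0 v)))
        = ∫ x, Real.toNNReal (gaussianPDFReal 0 v x) • max (x - lam) 0 := by
      exact integral_withDensity_eq_integral_smul hmeas _
    rw [h1]
    have h2 : (fun x => Real.toNNReal (gaussianPDFReal 0 v x) • max (x - lam) 0)
        = Set.indicator (Ioi lam) (fun x => (x - lam) * (C * Real.exp (-b * x ^ 2))) := by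
      funext x
      rw [NNReal.smul_def, Real.coe_toNNReal _ (gaussianPDFReal_nonneg 0 v x), hpdf x]
      simp only [Set.indicator_apply, Set.mem_Ioi]
      split_ifs with hx
      · rw [smul_eq_mul, max_eq_left (by linarith)]
        ring
      · rw [max_eq_right (by push_neg at hx; linarith)]
        simp
    rw [h2, integral_indicator measurableSet_Ioi]
  -- integrability of the two comparison integrands
  have hint1 : IntegrableOn (fun x : ℝ => (x - lam) * (C * Real.exp (-b * x ^ 2)))
      (Ioi lam) := by
    have h := aux_int_cubic hb (-(C * lam)) C 0 0
    refine (h.congr (Filter.Eventually.of_forall fun x => ?_)).integrableOn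
    ring
  have hint2 : IntegrableOn (fun x : ℝ => x * (C * Real.exp (-b * x ^ 2))) (Ioi lam) := by
    have h := aux_int_cubic hb 0 C 0 0
    refine (h.congr (Filter.Eventually.of_forall fun x => ?_)).integrableOn
    ring
  -- upper bound
  have hupper : (∫ x in Ioi lam, (x - lam) * (C * Real.exp (-b * x ^ 2)))
      ≤ σ ^ 2 * C * Real.exp (-b * lam ^ 2) := by
    have hmono : (∫ x in Ioi lam, (x - lam) * (C * Real.exp (-b * x ^ 2)))
        ≤ ∫ x in Ioi lam, x * (C * Real.exp (-b * x ^ 2)) := by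
      refine setIntegral_mono_on hint1 hint2 measurableSet_Ioi fun x hx => ?_
      have h1 : 0 ≤ C * Real.exp (-b * x ^ 2) := by positivity
      nlinarith [h1, hlam0]
    have hval : (∫ x in Ioi lam, x * (C * Real.exp (-b * x ^ 2)))
        = σ ^ 2 * C * Real.exp (-b * lam ^ 2) := by
      have h := aux_key hb (-(σ ^ 2 * C)) 0 0 lam
      have heq : ∀ x ∈ Ioi lam,
          ((0 + 2 * 0 * x) - 2 * b * x * (-(σ ^ 2 * C) + 0 * x + 0 * x ^ 2))
            * Real.exp (-b * x ^ 2) = x * (C * Real.exp (-b * x ^ 2)) := by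
        intro x _
        rw [hbdef]
        field_simp
        ring
      rw [← setIntegral_congr_fun measurableSet_Ioi heq, h]
      ring
    linarith
  -- lower bound
  set c' : ℝ := lam ^ 2 + 3 * σ ^ 2 with hc'def
  have hc' : 0 < c' := by positivity
  have hlower : C * σ ^ 4 / c' * Real.exp (-b * lam ^ 2)
      ≤ ∫ x in Ioi lam, (x - lam) * (C * Real.exp (-b * x ^ 2)) := by
    set a0 : ℝ := -(C * σ ^ 2 / c') * (σ ^ 2 - 2 * lam ^ 2) with ha0
    set a1 : ℝ := -(C * σ ^ 2 / c') * (3 * lam) with ha1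
    set a2 : ℝ := (C * σ ^ 2 / c') with ha2
    have hkey := aux_key hb a0 a1 a2 lam
    have heq : ∀ x ∈ Ioi lam, ((a1 + 2 * a2 * x) - 2 * b * x * (a0 + a1 * x + a2 * x ^ 2))
        * Real.exp (-b * x ^ 2)
        = ((x - lam) - (x - lam) ^ 3 / c') * (C * Real.exp (-b * x ^ 2)) := by
      intro x _
      rw [ha0, ha1, ha2, hbdef]
      field_simp
      ring
    have hval : (∫ x in Ioi lam, ((x - lam) - (x - lam) ^ 3 / c') * (C * Real.exp (-b * x ^ 2)))
        = C * σ ^ 4 / c' * Real.exp (-b * lam ^ 2) := by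
      rw [← setIntegral_congr_fun measurableSet_Ioi heq, hkey]
      rw [ha0, ha1, ha2]
      field_simp
      ring
    have hintg : IntegrableOn
        (fun x : ℝ => ((x - lam) - (x - lam) ^ 3 / c') * (C * Real.exp (-b * x ^ 2)))
        (Ioi lam) := by
      have h := aux_int_cubic hb (C * (-lam - (-lam) ^ 3 / c'))
        (C * (1 - 3 * lam ^ 2 / c')) (C * (3 * lam / c')) (C * (-1 / c'))
      refine (h.congr (Filter.Eventually.of_forall fun x => ?_)).integrableOn
      field_simp
      ring
    rw [← hval]
    refine setIntegral_mono_on hintg hint1 measurableSet_Ioi fun x hx => ?_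
    have hx' : lam < x := hx
    have h1 : 0 ≤ C * Real.exp (-b * x ^ 2) := by positivity
    have h2 : 0 ≤ (x - lam) ^ 3 / c' := div_nonneg (pow_nonneg (by linarith) 3) hc'.le
    nlinarith [mul_nonneg h2 h1]
  -- relating constants to stdGaussianPDF
  have hsqrt : Real.sqrt (2 * π * σ ^ 2) = Real.sqrt (2 * π) * σ := by
    rw [Real.sqrt_mul (by positivity), Real.sqrt_sq hσ.le]
  have hexp : Real.exp (-(lam / σ) ^ 2 / 2) = Real.exp (-b * lam ^ 2) := by
    congr 1
    rw [hbdef]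
    field_simp
  have hsq2pi : 0 < Real.sqrt (2 * π) := Real.sqrt_pos.mpr (by positivity)
  have hCval : C = (Real.sqrt (2 * π))⁻¹ * σ⁻¹ := by
    rw [hCdef, hsqrt, mul_inv]
  have hstd : stdGaussianPDF (lam / σ) = σ * (C * Real.exp (-b * lam ^ 2)) := by
    rw [stdGaussianPDF, hexp, hCval]
    field_simp
  constructor
  · -- lower bound
    rw [hE]
    refine le_trans ?_ hlower
    have hkey2 : σ * c' ≤ lam ^ 3 := by
      nlinarith [mul_nonneg (sub_nonneg.2 hlam) (sq_nonneg lam),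
        mul_nonneg (mul_nonneg (sub_nonneg.2 hlam) (by linarith : (0:ℝ) ≤ lam + 2 * σ)) hσ.le,
        hσ2, hσ]
    have h5 : σ ^ 4 / lam ^ 3 * σ ≤ σ ^ 4 / c' := by
      rw [div_mul_eq_mul_div, div_le_div_iff₀ (by positivity) hc']
      calc σ ^ 4 * σ * c' = σ ^ 4 * (σ * c') := by ring
        _ ≤ σ ^ 4 * lam ^ 3 := mul_le_mul_of_nonneg_left hkey2 (by positivity)
    calc σ ^ 4 / lam ^ 3 * stdGaussianPDF (lam / σ)
        = (σ ^ 4 / lam ^ 3 * σ) * (C * Real.exp (-b * lam ^ 2)) := by rw [hstd]; ring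
      _ ≤ (σ ^ 4 / c') * (C * Real.exp (-b * lam ^ 2)) :=
          mul_le_mul_of_nonneg_right h5 (by positivity)
      _ = C * σ ^ 4 / c' * Real.exp (-b * lam ^ 2) := by ring
  · -- upper bound
    rw [hE]
    calc (∫ x in Ioi lam, (x - lam) * (C * Real.exp (-b * x ^ 2)))
        ≤ σ ^ 2 * C * Real.exp (-b * lam ^ 2) := hupper
      _ = σ * stdGaussianPDF (lam / σ) := by rw [hstd]; ring
end

section
/- Let λ̄_γ := sup{ λ ∈ ℝ : (γ/(1−γ))·φ(−λ) ≥ λ } for γ ∈ (0,1), where φ is the standard normal PDF. Then λ̄_γ = √(2 log(1/(1−γ))) + o(1) as γ → 1⁻. -/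
open Filter

lemma sqrt2pi_ge_one : (1 : ℝ) ≤ Real.sqrt (2 * Real.pi) := by
  rw [show (1:ℝ) = Real.sqrt 1 by simp]
  exact Real.sqrt_le_sqrt (by nlinarith [Real.pi_gt_three])

lemma sqrt2pi_le_three : Real.sqrt (2 * Real.pi) ≤ 3 := by
  rw [show (3:ℝ) = Real.sqrt 9 by rw [show (9:ℝ) = 3^2 by norm_num]; exact (Real.sqrt_sq (by norm_num)).symm]
  exact Real.sqrt_le_sqrt (by nlinarith [Real.pi_lt_d2])

lemma exp_sq_quarter_le {x : ℝ} (hx : 0 ≤ x) : x ^ 2 / 4 ≤ Real.exp x := by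
  have h := Real.add_one_le_exp (x / 2)
  have h0 : (0:ℝ) ≤ x / 2 + 1 := by linarith
  have hsq : (x / 2 + 1) ^ 2 ≤ (Real.exp (x / 2)) ^ 2 := by
    apply pow_le_pow_left₀ h0 (by linarith [h]) 2
  have hx2 : Real.exp (x / 2) * Real.exp (x / 2) = Real.exp x := by
    rw [← Real.exp_add]; ring_nf
  nlinarith [Real.exp_pos (x / 2), sq_nonneg (x/2 + 1)]

/-- exp of minus the square of L equals 1 - γ -/
lemma exp_negL {γ : ℝ} (h0 : 0 < γ) (h1 : γ < 1) :
    Real.exp (-(Real.sqrt (2 * Real.log (1 / (1 - γ)))) ^ 2 / 2) = 1 - γ := by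
  have h1' : 0 < 1 - γ := by linarith
  have hx : 1 ≤ 1 / (1 - γ) := by rw [le_div_iff₀ h1']; linarith
  have hlog : 0 ≤ Real.log (1 / (1 - γ)) := Real.log_nonneg hx
  rw [Real.sq_sqrt (by linarith)]
  have : -(2 * Real.log (1 / (1 - γ))) / 2 = -Real.log (1 / (1 - γ)) := by ring
  rw [this, Real.exp_neg, Real.exp_log (by positivity), one_div, inv_inv]

set_option maxHeartbeats 1600000 in
/-- The upper bound `λ̄_γ = sup{λ : (γ/(1−γ)) φ(−λ) ≥ λ}` on the Gittins index
satisfies `λ̄_γ = √(2 log(1/(1−γ))) + o(1)` as `γ → 1⁻`. -/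
theorem lambda_bar_asymptotics :
    Tendsto
      (fun γ : ℝ =>
        sSup {lam : ℝ | lam ≤ γ / (1 - γ) * stdGaussianPDF (-lam)} -
          Real.sqrt (2 * Real.log (1 / (1 - γ))))
      (nhdsWithin 1 (Set.Ioo (0 : ℝ) 1)) (nhds 0) := by
  have hs1 := sqrt2pi_ge_one
  have hs3 := sqrt2pi_le_three
  have hspos : (0:ℝ) < Real.sqrt (2 * Real.pi) := by linarith
  -- log(1/(1-γ)) → ∞
  have hlogtop : Tendsto (fun γ : ℝ => Real.log (1 / (1 - γ)))
      (nhdsWithin 1 (Set.Ioo (0 : ℝ) 1)) atTop := by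
    apply Real.tendsto_log_atTop.comp
    have hsub : Tendsto (fun γ : ℝ => 1 - γ) (nhdsWithin 1 (Set.Ioo (0 : ℝ) 1))
        (nhdsWithin 0 (Set.Ioi (0:ℝ))) := by
      apply tendsto_nhdsWithin_of_tendsto_nhds_of_eventually_within
      · have : Tendsto (fun γ : ℝ => 1 - γ) (nhds 1) (nhds (1 - 1)) :=
          (continuous_const.sub continuous_id).tendsto 1
        simpa using this.mono_left nhdsWithin_le_nhds
      · filter_upwards [self_mem_nhdsWithin] with γ hγ
        exact Set.mem_Ioi.2 (by linarith [hγ.2])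
    have := tendsto_inv_nhdsGT_zero.comp hsub
    simpa [one_div, Function.comp_def] using this
  rw [Metric.tendsto_nhds]
  intro ε hε
  set ε' : ℝ := min ε 1 / 2 with hε'def
  have hε'pos : 0 < ε' := by positivity
  have hε'le1 : ε' ≤ 1 := by
    have : min ε 1 ≤ 1 := min_le_right _ _
    simp only [hε'def]; linarith
  have hε'ltε : ε' < ε := by
    rcases le_total ε 1 with h | h
    · simp only [hε'def, min_eq_left h]; linarith
    · simp only [hε'def, min_eq_right h]; linarith
  clear_value ε'
  -- eventually conditions
  have hM : ∀ᶠ γ : ℝ in nhdsWithin 1 (Set.Ioo (0:ℝ) 1),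
      max 1 (192 / ε' ^ 2) ^ 2 ≤ 2 * Real.log (1 / (1 - γ)) := by
    have := hlogtop.eventually_ge_atTop (max 1 (192 / ε' ^ 2) ^ 2 / 2)
    filter_upwards [this] with γ h; linarith
  have hγhalf : ∀ᶠ γ : ℝ in nhdsWithin 1 (Set.Ioo (0:ℝ) 1), (1:ℝ)/2 ≤ γ := by
    apply eventually_nhdsWithin_of_eventually_nhds
    have : Set.Ioi (1/2 : ℝ) ∈ nhds (1:ℝ) := Ioi_mem_nhds (by norm_num)
    filter_upwards [this] with γ h; exact le_of_lt h
  filter_upwards [self_mem_nhdsWithin, hM, hγhalf] with γ hγmem hMγ hγhalf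
  obtain ⟨hγ0, hγ1⟩ := hγmem
  set L : ℝ := Real.sqrt (2 * Real.log (1 / (1 - γ))) with hLdef
  have h1' : 0 < 1 - γ := by linarith
  have hc : 0 < γ / (1 - γ) := by positivity
  have hLnn : 0 ≤ L := Real.sqrt_nonneg _
  have hLge : max 1 (192 / ε' ^ 2) ≤ L := by
    rw [hLdef]
    have : max 1 (192 / ε' ^ 2) = Real.sqrt (max 1 (192 / ε' ^ 2) ^ 2) :=
      (Real.sqrt_sq (le_max_of_le_left zero_le_one)).symm
    rw [this]
    exact Real.sqrt_le_sqrt hMγ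
  have hL1 : 1 ≤ L := le_trans (le_max_left _ _) hLge
  have hL48 : 192 / ε' ^ 2 ≤ L := le_trans (le_max_right _ _) hLge
  have hexpL : Real.exp (-L ^ 2 / 2) = 1 - γ := exp_negL hγ0 hγ1
  clear_value L
  set S : Set ℝ := {lam : ℝ | lam ≤ γ / (1 - γ) * stdGaussianPDF (-lam)} with hSdef
  have hmem : ∀ lam : ℝ, lam ∈ S ↔
      lam ≤ γ / (1 - γ) * ((Real.sqrt (2 * Real.pi))⁻¹ * Real.exp (-lam ^ 2 / 2)) := by
    intro lam
    simp [hSdef, stdGaussianPDF, neg_sq]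
  clear_value S
  -- S nonempty
  have hne : S.Nonempty := ⟨0, by rw [hmem]; positivity⟩
  -- S bounded above
  have hbdd : BddAbove S := by
    refine ⟨γ / (1 - γ), fun lam hlam => ?_⟩
    rw [hmem] at hlam
    have h1 : (Real.sqrt (2 * Real.pi))⁻¹ ≤ 1 := by
      exact inv_le_one_of_one_le₀ hs1
    have h2 : Real.exp (-lam ^ 2 / 2) ≤ 1 := by
      rw [Real.exp_le_one_iff]; nlinarith [sq_nonneg lam]
    calc lam ≤ γ / (1 - γ) * ((Real.sqrt (2 * Real.pi))⁻¹ * Real.exp (-lam ^ 2 / 2)) := hlam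
      _ ≤ γ / (1 - γ) * 1 := by
          apply mul_le_mul_of_nonneg_left _ hc.le
          calc (Real.sqrt (2 * Real.pi))⁻¹ * Real.exp (-lam ^ 2 / 2)
              ≤ 1 * 1 := mul_le_mul h1 h2 (Real.exp_pos _).le zero_le_one
            _ = 1 := by ring
      _ = γ / (1 - γ) := mul_one _
  -- Upper bound: sSup S ≤ L + ε'
  have hupper : sSup S ≤ L + ε' := by
    apply csSup_le hne
    intro lam hlam
    by_contra hcon
    push_neg at hcon
    rw [hmem] at hlam
    have hlampos : 0 < lam := by linarith
    have hmono : Real.exp (-lam ^ 2 / 2) ≤ Real.exp (-(L + ε') ^ 2 / 2) := by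
      apply Real.exp_le_exp.2
      nlinarith
    have hkey : Real.exp (-(L + ε') ^ 2 / 2) ≤ (1 - γ) := by
      have : Real.exp (-(L + ε') ^ 2 / 2) =
          Real.exp (-L ^ 2 / 2) * Real.exp (-(L * ε' + ε' ^ 2 / 2)) := by
        rw [← Real.exp_add]; ring_nf
      rw [this, hexpL]
      have h2 : Real.exp (-(L * ε' + ε' ^ 2 / 2)) ≤ 1 := by
        rw [Real.exp_le_one_iff]; nlinarith
      nlinarith
    have hfinal : lam ≤ 1 := by
      have hinv : (Real.sqrt (2 * Real.pi))⁻¹ ≤ 1 := by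
        exact inv_le_one_of_one_le₀ hs1
      calc lam ≤ γ / (1 - γ) * ((Real.sqrt (2 * Real.pi))⁻¹ * Real.exp (-lam ^ 2 / 2)) := hlam
        _ ≤ γ / (1 - γ) * (1 * (1 - γ)) := by
            apply mul_le_mul_of_nonneg_left _ hc.le
            exact mul_le_mul hinv (le_trans hmono hkey) (Real.exp_pos _).le zero_le_one
        _ = γ := by field_simp
        _ ≤ 1 := hγ1.le
    linarith
  -- Lower bound: L - ε' ∈ S
  have hlower : L - ε' ≤ sSup S := by
    apply le_csSup hbdd
    rw [hmem]
    -- compute RHS = γ * s⁻¹ * exp(L ε' - ε'^2/2)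
    have hsplit : Real.exp (-(L - ε') ^ 2 / 2) =
        Real.exp (-L ^ 2 / 2) * Real.exp (L * ε' - ε' ^ 2 / 2) := by
      rw [← Real.exp_add]; ring_nf
    have hquad : (L * ε') ^ 2 / 4 ≤ Real.exp (L * ε') := by
      apply exp_sq_quarter_le; positivity
    have hehalf : (1:ℝ)/2 ≤ Real.exp (-(ε' ^ 2 / 2)) := by
      have := Real.add_one_le_exp (-(ε' ^ 2 / 2))
      nlinarith [sq_nonneg ε']
    have hexpsplit : Real.exp (L * ε' - ε' ^ 2 / 2) =
        Real.exp (L * ε') * Real.exp (-(ε' ^ 2 / 2)) := by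
      rw [← Real.exp_add]; ring_nf
    have h48 : 192 ≤ L * ε' ^ 2 := by
      rw [div_le_iff₀ (by positivity)] at hL48; linarith
    have hbig : (48:ℝ) * L ≤ Real.exp (L * ε') := by
      have h1 : 192 * L ≤ (L * ε') ^ 2 := by nlinarith
      linarith
    have hinv3 : (1:ℝ)/3 ≤ (Real.sqrt (2 * Real.pi))⁻¹ := by
      rw [le_inv_comm₀ (by norm_num) hspos]
      calc Real.sqrt (2 * Real.pi) ≤ 3 := hs3
        _ = (1/3 : ℝ)⁻¹ := by norm_num
    calc L - ε' ≤ L := by linarith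
      _ ≤ γ * ((1:ℝ)/3) * ((48 * L) * (1/2)) := by nlinarith
      _ ≤ γ * (Real.sqrt (2 * Real.pi))⁻¹ * (Real.exp (L * ε') * Real.exp (-(ε' ^ 2 / 2))) := by
          apply mul_le_mul
          · exact mul_le_mul_of_nonneg_left hinv3 hγ0.le
          · apply mul_le_mul hbig hehalf (by norm_num) (Real.exp_pos _).le
          · positivity
          · positivity
      _ = γ / (1 - γ) * ((Real.sqrt (2 * Real.pi))⁻¹ *
            ((1 - γ) * Real.exp (L * ε' - ε' ^ 2 / 2))) := by
          rw [hexpsplit]; field_simp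
      _ = γ / (1 - γ) * ((Real.sqrt (2 * Real.pi))⁻¹ * Real.exp (-(L - ε') ^ 2 / 2)) := by
          rw [hsplit, hexpL]
  -- conclude
  rw [Real.dist_eq, sub_zero]
  rw [abs_sub_lt_iff]
  constructor
  · linarith
  · linarith
end
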